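/- Let M1 = (E,𝓘1) be a partition matroid with all-one upper bounds and let M2 = (E,𝓘2) be an arbitrary matroid on E. Let I ∈ 𝓘1∩𝓘2, let s ∈ S_I\T_I, let y' ∈ I, and let P be a shortest s–y' path in D'[I] such that I △ V(P) ∈ 𝓘1∩𝓘2. Let x ∈ E\I with x ∉ P, and let y ∈ I be such that there is no s–y path in D'[I] of length at most |P|. Assume moreover that (y',x) ∈ A'1[I] implies x ∉ T_I. Then the following are equivalent: (i) (y',x) ∈ A'1[I] and (x,y) ∈ A'2[I]; (ii) {y',x} ∉ 𝓘1∩𝓘2 and I △ (V(P) ∪ {x,y}) ∈ 𝓘1∩𝓘2. -/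

import Mathlib

open Classical Finset

structure FinMatroid (α : Type) : Type where
  Indep : Finset α → Prop
  empty_indep : Indep ∅
  subset_indep : ∀ ⦃I J : Finset α⦄, Indep J → I ⊆ J → Indep I
  exchange : ∀ ⦃I J : Finset α⦄, Indep I → Indep J → I.card < J.card →
    ∃ x ∈ J \ I, Indep (insert x I)

noncomputable def FinMatroid.rank {α : Type} (M : FinMatroid α) (X : Finset α) : ℕ :=
  (X.powerset.filter (fun Y => M.Indep Y)).sup Finset.card

def A1 {α : Type} (M1 : FinMatroid α) (I : Finset α) (a b : α) : Prop :=
  a ∈ I ∧ b ∉ I ∧ M1.Indep (insert b (I.erase a))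

def A2 {α : Type} (M2 : FinMatroid α) (I : Finset α) (a b : α) : Prop :=
  a ∉ I ∧ b ∈ I ∧ M2.Indep (insert a (I.erase b))

def DArcs {α : Type} (M1 M2 : FinMatroid α) (I : Finset α) (a b : α) : Prop :=
  A1 M1 I a b ∨ A2 M2 I a b

def inS {α : Type} (M1 : FinMatroid α) (I : Finset α) (s : α) : Prop :=
  s ∉ I ∧ M1.Indep (insert s I)

def inT {α : Type} (M2 : FinMatroid α) (I : Finset α) (t : α) : Prop :=
  t ∉ I ∧ M2.Indep (insert t I)

def A1' {α : Type} (M1 : FinMatroid α) (I : Finset α) (a b : α) : Prop :=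
  A1 M1 I a b ∧ ¬ inS M1 I b

def A2' {α : Type} (M2 : FinMatroid α) (I : Finset α) (a b : α) : Prop :=
  A2 M2 I a b ∧ ¬ inT M2 I a

def DArcs' {α : Type} (M1 M2 : FinMatroid α) (I : Finset α) (a b : α) : Prop :=
  A1' M1 I a b ∨ A2' M2 I a b

def IsCycle {α : Type} (A : α → α → Prop) (P : List α) : Prop :=
  ∃ h : P ≠ [], P.Nodup ∧ P.Chain' A ∧ A (P.getLast h) (P.head h)

def IsPathFromTo {α : Type} (A : α → α → Prop) (S T : α → Prop) (P : List α) : Prop :=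
  ∃ h : P ≠ [], P.Nodup ∧ P.Chain' A ∧ S (P.head h) ∧ T (P.getLast h)

def IsPathBtw {α : Type} (A : α → α → Prop) (s e : α) (P : List α) : Prop :=
  ∃ h : P ≠ [], P.Nodup ∧ P.Chain' A ∧ P.head h = s ∧ P.getLast h = e

noncomputable def cost {α : Type} (w : α → ℝ) (I : Finset α) (e : α) : ℝ :=
  if e ∈ I then w e else -w e

noncomputable def costOf {α : Type} (w : α → ℝ) (I : Finset α) (P : List α) : ℝ :=
  (P.map (cost w I)).sum

noncomputable def symmd {α : Type} (A B : Finset α) : Finset α := (A \ B) ∪ (B \ A)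

namespace FinMatroid

variable {α : Type} (M : FinMatroid α)

lemma exists_grow : ∀ (n : ℕ) {A B : Finset α}, M.Indep A → M.Indep B →
    B.card - A.card ≤ n → A.card ≤ B.card →
    ∃ C, M.Indep C ∧ A ⊆ C ∧ C ⊆ A ∪ B ∧ C.card = B.card := by
  intro n
  induction n with
  | zero =>
    intro A B hA _ hle hcard
    exact ⟨A, hA, Finset.Subset.rfl, Finset.subset_union_left, by omega⟩
  | succ n ih =>
    intro A B hA hB hle hcard
    by_cases h : A.card = B.card
    · exact ⟨A, hA, Finset.Subset.rfl, Finset.subset_union_left, h⟩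
    · have hlt : A.card < B.card := lt_of_le_of_ne hcard h
      obtain ⟨z, hz, hzind⟩ := M.exchange hA hB hlt
      rw [Finset.mem_sdiff] at hz
      have hcz : (insert z A).card = A.card + 1 := Finset.card_insert_of_notMem hz.2
      obtain ⟨C, h1, h2, h3, h4⟩ := ih hzind hB (by omega) (by omega)
      refine ⟨C, h1, (Finset.subset_insert _ _).trans h2, h3.trans ?_, h4⟩
      intro a ha
      rcases Finset.mem_union.1 ha with ha | ha
      · rcases Finset.mem_insert.1 ha with rfl | ha
        · exact Finset.mem_union_right _ hz.1
        · exact Finset.mem_union_left _ ha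
      · exact Finset.mem_union_right _ ha

lemma rank_le_card (X : Finset α) : M.rank X ≤ X.card := by
  apply Finset.sup_le
  intro Y hY
  rw [Finset.mem_filter, Finset.mem_powerset] at hY
  exact Finset.card_le_card hY.1

lemma card_le_rank {K X : Finset α} (hK : M.Indep K) (hKX : K ⊆ X) : K.card ≤ M.rank X :=
  Finset.le_sup (by rw [Finset.mem_filter, Finset.mem_powerset]; exact ⟨hKX, hK⟩)

lemma exists_rank_witness (X : Finset α) : ∃ B, B ⊆ X ∧ M.Indep B ∧ B.card = M.rank X := by
  have hne : (X.powerset.filter (fun Y => M.Indep Y)).Nonempty :=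
    ⟨∅, by rw [Finset.mem_filter, Finset.mem_powerset]; exact ⟨Finset.empty_subset _, M.empty_indep⟩⟩
  obtain ⟨B, hB, hBeq⟩ := Finset.exists_mem_eq_sup _ hne Finset.card
  rw [Finset.mem_filter, Finset.mem_powerset] at hB
  exact ⟨B, hB.1, hB.2, hBeq.symm⟩

lemma rank_eq_card_iff {X : Finset α} : M.rank X = X.card ↔ M.Indep X := by
  constructor
  · intro h
    obtain ⟨B, hBX, hBi, hBc⟩ := M.exists_rank_witness X
    have : B = X := Finset.eq_of_subset_of_card_le hBX (by omega)
    rwa [← this]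
  · intro h
    exact le_antisymm (M.rank_le_card X) (M.card_le_rank h Finset.Subset.rfl)

lemma indep_rank {X : Finset α} (h : M.Indep X) : M.rank X = X.card := (M.rank_eq_card_iff).2 h

lemma rank_mono {X Y : Finset α} (h : X ⊆ Y) : M.rank X ≤ M.rank Y := by
  obtain ⟨B, hBX, hBi, hBc⟩ := M.exists_rank_witness X
  rw [← hBc]
  exact M.card_le_rank hBi (hBX.trans h)

lemma missing_one {I : Finset α} {x : α} (hx : x ∉ I) {C : Finset α}
    (hC : C ⊆ insert x I) (hxC : x ∈ C) (hcard : C.card = I.card) :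
    ∃ y, y ∈ I ∧ y ∉ C ∧ C = insert x (I.erase y) := by
  have hcins : (insert x I).card = I.card + 1 := Finset.card_insert_of_notMem hx
  have hssub : ∃ y ∈ insert x I, y ∉ C := by
    by_contra hcon
    push_neg at hcon
    have := Finset.card_le_card hcon
    omega
  obtain ⟨y, hyI, hyC⟩ := hssub
  have hyne : y ≠ x := by rintro rfl; exact hyC hxC
  have hyI' : y ∈ I := by
    rcases Finset.mem_insert.1 hyI with h | h
    · exact absurd h hyne
    · exact h
  refine ⟨y, hyI', hyC, ?_⟩
  have hsub : C ⊆ insert x (I.erase y) := by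
    intro a ha
    rcases Finset.mem_insert.1 (hC ha) with rfl | haI
    · exact Finset.mem_insert_self _ _
    · refine Finset.mem_insert_of_mem (Finset.mem_erase.2 ⟨?_, haI⟩)
      rintro rfl; exact hyC ha
  have hcard2 : (insert x (I.erase y)).card = I.card := by
    rw [Finset.card_insert_of_notMem (by
      intro h; exact hx (Finset.mem_of_mem_erase h)),
      Finset.card_erase_of_mem hyI']
    have : 1 ≤ I.card := Finset.card_pos.2 ⟨y, hyI'⟩
    omega
  exact Finset.eq_of_subset_of_card_le hsub (by omega)

lemma rank_insert_of_dep {K : Finset α} {e : α} (hK : M.Indep K)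
    (hdep : ¬ M.Indep (insert e K)) : M.rank (insert e K) = M.rank K := by
  refine le_antisymm ?_ (M.rank_mono (Finset.subset_insert _ _))
  obtain ⟨B, hBX, hBi, hBc⟩ := M.exists_rank_witness (insert e K)
  rw [← hBc, M.indep_rank hK]
  by_contra hgt
  push_neg at hgt
  have hle : (insert e K).card ≤ K.card + 1 := Finset.card_insert_le _ _
  have : B = insert e K := Finset.eq_of_subset_of_card_le hBX (by omega)
  rw [this] at hBi
  exact hdep hBi

lemma rank_insert_congr {D X : Finset α} (e : α) (hDX : D ⊆ X)
    (h : M.rank (insert e D) = M.rank D) : M.rank (insert e X) = M.rank X := by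
  by_cases he : e ∈ X
  · rw [Finset.insert_eq_self.2 he]
  have heD : e ∉ D := fun hh => he (hDX hh)
  obtain ⟨B, hBD, hBi, hBc⟩ := M.exists_rank_witness D
  have hBe : ¬ M.Indep (insert e B) := by
    intro h'
    have h1 : (insert e B).card ≤ M.rank (insert e D) :=
      M.card_le_rank h' (Finset.insert_subset_insert _ hBD)
    have h2 : (insert e B).card = B.card + 1 :=
      Finset.card_insert_of_notMem (fun hh => heD (hBD hh))
    omega
  obtain ⟨BX, hBXX, hBXi, hBXc⟩ := M.exists_rank_witness X
  obtain ⟨C, hCi, hBC, hCsub, hCc⟩ := M.exists_grow (BX.card - B.card) hBi hBXi le_rfl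
    (by rw [hBc, hBXc]; exact M.rank_mono hDX)
  have hCX : C ⊆ X := hCsub.trans (Finset.union_subset (hBD.trans hDX) hBXX)
  refine le_antisymm ?_ (M.rank_mono (Finset.subset_insert _ _))
  obtain ⟨K, hKX, hKi, hKc⟩ := M.exists_rank_witness (insert e X)
  rw [← hKc]
  by_contra hgt
  push_neg at hgt
  have hCcard : C.card = M.rank X := by rw [hCc, hBXc]
  have hlt : C.card < K.card := by omega
  obtain ⟨z, hz, hzi⟩ := M.exchange hCi hKi hlt
  rw [Finset.mem_sdiff] at hz
  rcases Finset.mem_insert.1 (hKX hz.1) with rfl | hzX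
  · exact hBe (M.subset_indep hzi (Finset.insert_subset_insert _ hBC))
  · have : (insert z C).card ≤ M.rank X :=
      M.card_le_rank hzi (Finset.insert_subset hzX hCX)
    rw [Finset.card_insert_of_notMem hz.2] at this
    omega

lemma rank_union_eq {A Z : Finset α}
    (h : ∀ z ∈ Z, ∃ D, D ⊆ A ∧ M.rank (insert z D) = M.rank D) :
    M.rank (A ∪ Z) = M.rank A := by
  induction Z using Finset.induction with
  | empty => rw [Finset.union_empty]
  | @insert z Z hz ih =>
    have h1 : A ∪ insert z Z = insert z (A ∪ Z) := Finset.union_insert _ _ _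
    obtain ⟨D, hDA, hD⟩ := h z (Finset.mem_insert_self _ _)
    have hsub2 : D ⊆ A ∪ Z := hDA.trans Finset.subset_union_left
    rw [h1, M.rank_insert_congr z hsub2 hD]
    exact ih (fun w hw => h w (Finset.mem_insert_of_mem hw))


lemma staircase {I : Finset α} (hI : M.Indep I) {n : ℕ} (xs ys : Fin n → α)
    (hxI : ∀ i, xs i ∉ I) (hyI : ∀ i, ys i ∈ I)
    (hxinj : Function.Injective xs) (hyinj : Function.Injective ys)
    (hdep : ∀ i, ¬ M.Indep (insert (xs i) I))
    (hex : ∀ i, M.Indep (insert (xs i) (I.erase (ys i))))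
    (hforb : ∀ i j : Fin n, i < j → ¬ M.Indep (insert (xs i) (I.erase (ys j)))) :
    M.Indep ((I \ Finset.image ys Finset.univ) ∪ Finset.image xs Finset.univ) := by
  classical
  set Y := Finset.image ys Finset.univ with hYdef
  set X := Finset.image xs Finset.univ with hXdef
  set J := (I \ Y) ∪ X with hJdef
  have hYI : Y ⊆ I := by
    intro a ha
    rw [hYdef, Finset.mem_image] at ha
    obtain ⟨i, _, rfl⟩ := ha
    exact hyI i
  have cardY : Y.card = n := by
    rw [hYdef, Finset.card_image_of_injective _ hyinj, Finset.card_univ, Fintype.card_fin]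
  have cardX : X.card = n := by
    rw [hXdef, Finset.card_image_of_injective _ hxinj, Finset.card_univ, Fintype.card_fin]
  have hXI : ∀ a ∈ X, a ∉ I := by
    intro a ha
    rw [hXdef, Finset.mem_image] at ha
    obtain ⟨i, _, rfl⟩ := ha
    exact hxI i
  have cardJ : J.card = I.card := by
    have hdisj : Disjoint (I \ Y) X := by
      rw [Finset.disjoint_right]
      intro a haX haIY
      exact hXI a haX (Finset.mem_sdiff.1 haIY).1
    have h1 : (I \ Y).card = I.card - n := by rw [Finset.card_sdiff_of_subset hYI, cardY]
    have h2 : n ≤ I.card := by rw [← cardY]; exact Finset.card_le_card hYI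
    rw [hJdef, Finset.card_union_of_disjoint hdisj, h1, cardX]
    omega
  -- Claim 1
  have claim1 : ∀ j : Fin n,
      ¬ M.Indep (insert (xs j) (I \ Finset.image ys (Finset.univ.filter (fun i => j < i)))) := by
    intro j hind
    set S := Finset.image ys (Finset.univ.filter (fun i => j < i)) with hSdef
    have hSI : S ⊆ I := by
      intro a ha
      rw [hSdef, Finset.mem_image] at ha
      obtain ⟨i, _, rfl⟩ := ha
      exact hyI i
    set D := insert (xs j) (I \ S) with hDdef
    have hDsub : D ⊆ insert (xs j) I :=
      Finset.insert_subset_insert _ (Finset.sdiff_subset)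
    by_cases hempty : (Finset.univ.filter (fun i : Fin n => j < i)) = ∅
    · have : S = ∅ := by rw [hSdef, hempty, Finset.image_empty]
      rw [hDdef, this, Finset.sdiff_empty] at hind
      exact hdep j hind
    · have hSne : 0 < S.card := by
        rw [hSdef]
        have h1 : (Finset.univ.filter (fun i : Fin n => j < i)).Nonempty :=
          Finset.nonempty_of_ne_empty hempty
        obtain ⟨i, hi⟩ := h1
        exact Finset.card_pos.2 ⟨ys i, Finset.mem_image_of_mem _ hi⟩
      have hcardD : D.card = I.card - S.card + 1 := by
        rw [hDdef, Finset.card_insert_of_notMem (fun hh => hxI j (Finset.mem_sdiff.1 hh).1),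
          Finset.card_sdiff_of_subset hSI]
      have hScard : S.card ≤ I.card := Finset.card_le_card hSI
      obtain ⟨C, hCi, hDC, hCsub, hCc⟩ := M.exists_grow (I.card - D.card) hind hI le_rfl (by omega)
      have hCsub2 : C ⊆ insert (xs j) I := by
        refine hCsub.trans ?_
        refine Finset.union_subset hDsub (Finset.subset_insert _ _)
      obtain ⟨e, heI, heC, hCeq⟩ := missing_one (hxI j) hCsub2 (hDC (Finset.mem_insert_self _ _)) hCc
      have heD : e ∉ D := fun hh => heC (hDC hh)
      have heS : e ∈ S := by
        by_contra heS
        exact heD (by rw [hDdef]; exact Finset.mem_insert_of_mem (Finset.mem_sdiff.2 ⟨heI, heS⟩))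
      rw [hSdef, Finset.mem_image] at heS
      obtain ⟨l, hl, rfl⟩ := heS
      rw [Finset.mem_filter] at hl
      rw [hCeq] at hCi
      exact hforb j l hl.2 hCi
  -- the sets K j
  set K : Fin n → Finset α :=
    fun j => insert (xs j) (I \ Finset.image ys (Finset.univ.filter (fun i => j ≤ i))) with hKdef
  have hKind : ∀ j, M.Indep (K j) := by
    intro j
    refine M.subset_indep (hex j) ?_
    rw [hKdef]
    refine Finset.insert_subset_insert _ ?_
    intro a ha
    rw [Finset.mem_sdiff] at ha
    refine Finset.mem_erase.2 ⟨?_, ha.1⟩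
    rintro rfl
    exact ha.2 (Finset.mem_image_of_mem _ (Finset.mem_filter.2 ⟨Finset.mem_univ _, le_refl _⟩))
  have hDK : ∀ j, insert (ys j) (K j)
      = insert (xs j) (I \ Finset.image ys (Finset.univ.filter (fun i => j < i))) := by
    intro j
    ext a
    simp only [hKdef, Finset.mem_insert, Finset.mem_sdiff, Finset.mem_image, Finset.mem_filter]
    constructor
    · rintro (rfl | rfl | ⟨haI, hnot⟩)
      · refine Or.inr ⟨hyI j, ?_⟩
        rintro ⟨i, ⟨-, hji⟩, hia⟩
        exact absurd (hyinj hia) (ne_of_gt hji)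
      · exact Or.inl rfl
      · refine Or.inr ⟨haI, ?_⟩
        rintro ⟨i, ⟨-, hji⟩, hia⟩
        exact hnot ⟨i, ⟨Finset.mem_univ _, le_of_lt hji⟩, hia⟩
    · rintro (rfl | ⟨haI, hnot⟩)
      · exact Or.inr (Or.inl rfl)
      · by_cases ha : a = ys j
        · exact Or.inl ha
        · refine Or.inr (Or.inr ⟨haI, ?_⟩)
          rintro ⟨i, ⟨-, hji⟩, hia⟩
          rcases lt_or_eq_of_le hji with h | h
          · exact hnot ⟨i, ⟨Finset.mem_univ _, h⟩, hia⟩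
          · exact ha (by rw [← hia, ← h])
  have hstep : ∀ j : Fin n, M.rank (insert (ys j) (K j)) = M.rank (K j) := by
    intro j
    refine M.rank_insert_of_dep (hKind j) ?_
    rw [hDK j]
    exact claim1 j
  -- main induction
  have hKsubJ : ∀ (m : ℕ) (j : Fin n), (j : ℕ) = m →
      K j ⊆ J ∪ Finset.image ys (Finset.univ.filter (fun i : Fin n => (i : ℕ) < m)) := by
    rintro m j rfl
    intro a ha
    rw [hKdef, Finset.mem_insert] at ha
    rcases ha with rfl | ha
    · exact Finset.mem_union_left _ (Finset.mem_union_right _ (Finset.mem_image_of_mem _ (Finset.mem_univ _)))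
    · rw [Finset.mem_sdiff] at ha
      by_cases hmem : a ∈ Y
      · rw [hYdef, Finset.mem_image] at hmem
        obtain ⟨l, -, rfl⟩ := hmem
        have hlj : l < j := by
          by_contra hlj
          push_neg at hlj
          exact ha.2 (Finset.mem_image_of_mem _ (Finset.mem_filter.2 ⟨Finset.mem_univ _, hlj⟩))
        exact Finset.mem_union_right _
          (Finset.mem_image_of_mem _ (Finset.mem_filter.2 ⟨Finset.mem_univ _, hlj⟩))
      · exact Finset.mem_union_left _ (Finset.mem_union_left _ (Finset.mem_sdiff.2 ⟨ha.1, hmem⟩))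
  have main : ∀ m : ℕ, m ≤ n →
      M.rank (J ∪ Finset.image ys (Finset.univ.filter (fun i : Fin n => (i : ℕ) < m))) = M.rank J := by
    intro m
    induction m with
    | zero =>
      intro _
      have : (Finset.univ.filter (fun i : Fin n => (i : ℕ) < 0)) = ∅ := by
        apply Finset.filter_false_of_mem
        intro i _
        omega
      rw [this, Finset.image_empty, Finset.union_empty]
    | succ m ih =>
      intro hm
      have hmn : m < n := by omega
      set jm : Fin n := ⟨m, hmn⟩ with hjm
      have hfil : (Finset.univ.filter (fun i : Fin n => (i : ℕ) < m + 1))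
          = insert jm (Finset.univ.filter (fun i : Fin n => (i : ℕ) < m)) := by
        ext i
        simp only [Finset.mem_filter, Finset.mem_insert, Finset.mem_univ, true_and]
        constructor
        · intro h
          by_cases hi : (i : ℕ) = m
          · exact Or.inl (Fin.ext hi)
          · exact Or.inr (by omega)
        · rintro (rfl | h)
          · simp [hjm]
          · omega
      have himg : J ∪ Finset.image ys (Finset.univ.filter (fun i : Fin n => (i : ℕ) < m + 1))
          = insert (ys jm) (J ∪ Finset.image ys (Finset.univ.filter (fun i : Fin n => (i : ℕ) < m))) := by
        rw [hfil, Finset.image_insert, Finset.union_insert]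
      rw [himg, M.rank_insert_congr _ (hKsubJ m jm rfl) (hstep jm), ih (by omega)]
  -- conclude
  have hfiln : (Finset.univ.filter (fun i : Fin n => (i : ℕ) < n)) = Finset.univ := by
    apply Finset.filter_true_of_mem
    intro i _
    exact i.2
  have hIsub : I ⊆ J ∪ Finset.image ys (Finset.univ.filter (fun i : Fin n => (i : ℕ) < n)) := by
    rw [hfiln]
    intro a ha
    by_cases hmem : a ∈ Y
    · exact Finset.mem_union_right _ hmem
    · exact Finset.mem_union_left _ (Finset.mem_union_left _ (Finset.mem_sdiff.2 ⟨ha, hmem⟩))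
  have h1 : I.card ≤ M.rank J := by
    have := M.card_le_rank hI hIsub
    rwa [main n le_rfl] at this
  have h2 : M.rank J = J.card := le_antisymm (M.rank_le_card J) (by omega)
  exact (M.rank_eq_card_iff).1 h2

lemma exists_matching {α : Type} (M : FinMatroid α) {I J : Finset α}
    (hI : M.Indep I) (hJ : M.Indep J) (hcard : J.card = I.card) :
    ∃ g : α → α, Set.InjOn g (J \ I : Finset α) ∧
      ∀ z ∈ J \ I, g z ∈ I \ J ∧ M.Indep (insert z (I.erase (g z))) := by
  classical
  set t : {a // a ∈ J \ I} → Finset α :=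
    fun z => (I \ J).filter (fun y => M.Indep (insert z.1 (I.erase y))) with htdef
  have htsub : ∀ z, t z ⊆ I \ J := fun z => Finset.filter_subset _ _
  have hzJI : ∀ z : {a // a ∈ J \ I}, z.1 ∈ J ∧ z.1 ∉ I := by
    intro z
    exact Finset.mem_sdiff.1 z.2
  have hcards : (J \ I).card = (I \ J).card := by
    have h1 : (J \ I).card + (J ∩ I).card = J.card := by
      rw [Finset.card_sdiff_add_card_inter]
    have h2 : (I \ J).card + (I ∩ J).card = I.card := by
      rw [Finset.card_sdiff_add_card_inter]
    rw [Finset.inter_comm] at h1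
    omega
  have hall : ∀ s : Finset {a // a ∈ J \ I}, s.card ≤ (s.biUnion t).card := by
    intro s
    set N := s.biUnion t with hNdef
    have hNsub : N ⊆ I \ J := by
      intro a ha
      rw [hNdef, Finset.mem_biUnion] at ha
      obtain ⟨z, _, hz⟩ := ha
      exact htsub z hz
    by_cases hcase : ∃ z ∈ s, M.Indep (insert z.1 I)
    · obtain ⟨z, hzs, hzi⟩ := hcase
      have htz : t z = I \ J := by
        refine le_antisymm (htsub z) ?_
        intro y hy
        rw [htdef, Finset.mem_filter]
        refine ⟨hy, M.subset_indep hzi ?_⟩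
        exact Finset.insert_subset_insert _ (Finset.erase_subset _ _)
      have hNeq : N = I \ J := le_antisymm hNsub (htz ▸ Finset.subset_biUnion_of_mem t hzs)
      have hsle : s.card ≤ (J \ I).card := by
        have := Finset.card_le_univ s
        rw [Fintype.card_coe] at this
        exact le_trans (Finset.card_le_card (Finset.subset_univ s)) (le_of_eq (by rw [Finset.card_univ, Fintype.card_coe]))
      rw [hNeq, ← hcards]
      exact hsle
    · push_neg at hcase
      have key : ∀ z ∈ s, M.rank (insert z.1 (I \ ((I \ J) \ t z)))
          = M.rank (I \ ((I \ J) \ t z)) := by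
        intro z hz
        set D := I \ ((I \ J) \ t z) with hDdef
        have hDI : D ⊆ I := Finset.sdiff_subset
        have hDind : M.Indep D := M.subset_indep hI hDI
        have hzI : z.1 ∉ I := (hzJI z).2
        refine M.rank_insert_of_dep hDind ?_
        intro hind
        by_cases hempty : (I \ J) \ t z = ∅
        · rw [hDdef, hempty, Finset.sdiff_empty] at hind
          exact hcase z hz hind
        · have hcpos : 0 < ((I \ J) \ t z).card :=
            Finset.card_pos.2 (Finset.nonempty_of_ne_empty hempty)
          have hcsub : ((I \ J) \ t z) ⊆ I := Finset.sdiff_subset.trans Finset.sdiff_subset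
          have hcle : ((I \ J) \ t z).card ≤ I.card := Finset.card_le_card hcsub
          have hcardD : (insert z.1 D).card = I.card - ((I \ J) \ t z).card + 1 := by
            rw [Finset.card_insert_of_notMem (fun hh => hzI (hDI hh)), hDdef,
              Finset.card_sdiff_of_subset hcsub]
          obtain ⟨C, hCi, hDC, hCsub, hCc⟩ :=
            M.exists_grow (I.card - (insert z.1 D).card) hind hI le_rfl (by omega)
          have hCsub2 : C ⊆ insert z.1 I := by
            refine hCsub.trans (Finset.union_subset ?_ (Finset.subset_insert _ _))
            exact Finset.insert_subset_insert _ hDI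
          obtain ⟨e, heI, heC, hCeq⟩ :=
            missing_one hzI hCsub2 (hDC (Finset.mem_insert_self _ _)) hCc
          have heD : e ∉ insert z.1 D := fun hh => heC (hDC hh)
          have heBad : e ∈ (I \ J) \ t z := by
            by_contra hcon
            exact heD (Finset.mem_insert_of_mem (Finset.mem_sdiff.2 ⟨heI, hcon⟩))
          rw [Finset.mem_sdiff] at heBad
          refine heBad.2 ?_
          rw [htdef, Finset.mem_filter]
          exact ⟨heBad.1, by rw [← hCeq]; exact hCi⟩
      have hDsubA : ∀ z ∈ s, I \ ((I \ J) \ t z) ⊆ (I ∩ J) ∪ N := by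
        intro z hz a ha
        rw [Finset.mem_sdiff] at ha
        by_cases haJ : a ∈ J
        · exact Finset.mem_union_left _ (Finset.mem_inter.2 ⟨ha.1, haJ⟩)
        · have haIJ : a ∈ I \ J := Finset.mem_sdiff.2 ⟨ha.1, haJ⟩
          have : a ∈ t z := by
            by_contra hcon
            exact ha.2 (Finset.mem_sdiff.2 ⟨haIJ, hcon⟩)
          exact Finset.mem_union_right _ (Finset.subset_biUnion_of_mem t hz this)
      have hrk : M.rank (((I ∩ J) ∪ N) ∪ s.image (fun z => z.1)) = M.rank ((I ∩ J) ∪ N) := by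
        apply M.rank_union_eq
        intro w hw
        rw [Finset.mem_image] at hw
        obtain ⟨z, hz, rfl⟩ := hw
        exact ⟨_, hDsubA z hz, key z hz⟩
      have hWind : M.Indep ((I ∩ J) ∪ s.image (fun z => z.1)) := by
        refine M.subset_indep hJ (Finset.union_subset ?_ ?_)
        · exact Finset.inter_subset_right
        · intro a ha
          rw [Finset.mem_image] at ha
          obtain ⟨z, _, rfl⟩ := ha
          exact (hzJI z).1
      have hWsub : (I ∩ J) ∪ s.image (fun z => z.1) ⊆ ((I ∩ J) ∪ N) ∪ s.image (fun z => z.1) :=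
        Finset.union_subset_union Finset.subset_union_left (Finset.Subset.refl _)
      have hWcard : ((I ∩ J) ∪ s.image (fun z => z.1)).card = (I ∩ J).card + s.card := by
        rw [Finset.card_union_of_disjoint, Finset.card_image_of_injective _ Subtype.val_injective]
        rw [Finset.disjoint_right]
        intro a ha
        rw [Finset.mem_image] at ha
        obtain ⟨z, _, rfl⟩ := ha
        intro hcon
        exact (hzJI z).2 (Finset.mem_inter.1 hcon).1
      have hchain : (I ∩ J).card + s.card ≤ (I ∩ J).card + N.card := by
        have h1 := M.card_le_rank hWind hWsub
        rw [hrk] at h1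
        have h2 := M.rank_le_card ((I ∩ J) ∪ N)
        have h3 := Finset.card_union_le (I ∩ J) N
        omega
      omega
  obtain ⟨f, hfinj, hft⟩ := (Finset.all_card_le_biUnion_card_iff_exists_injective t).1 hall
  refine ⟨fun a => if h : a ∈ J \ I then f ⟨a, h⟩ else a, ?_, ?_⟩
  · intro a ha b hb hab
    rw [Finset.mem_coe] at ha hb
    simp only [dif_pos ha, dif_pos hb] at hab
    have := hfinj hab
    exact congrArg Subtype.val this
  · intro z hz
    simp only [dif_pos hz]
    have := hft ⟨z, hz⟩
    rw [htdef, Finset.mem_filter] at this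
    exact ⟨this.1, this.2⟩

end FinMatroid

section PathLemmas
variable {α : Type} {A : α → α → Prop} {s e : α} {P : List α}

lemma take_ne_nil (m : ℕ) (hm : m < P.length) : P.take (m+1) ≠ [] := by
  have hlen : (P.take (m+1)).length = m+1 := by rw [List.length_take]; omega
  intro hh
  rw [hh] at hlen
  simp at hlen

lemma getLast_take_eq (m : ℕ) (hm : m < P.length) (h : P.take (m+1) ≠ []) :
    (P.take (m+1)).getLast h = P[m]'hm := by
  rw [List.getLast_eq_getElem]
  have hlen : (P.take (m+1)).length = m + 1 := by rw [List.length_take]; omega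
  have h2 : (P.take (m+1)).length - 1 = m := by omega
  simp only [h2]
  rw [List.getElem_take]

lemma head_take_eq (m : ℕ) (hm : m < P.length) (h : P.take (m+1) ≠ []) (hne : P ≠ []) :
    (P.take (m+1)).head h = P.head hne := by
  rw [List.head_eq_getElem, List.head_eq_getElem]
  rw [List.getElem_take]

lemma path_take (h : IsPathBtw A s e P) (m : ℕ) (hm : m < P.length) :
    IsPathBtw A s (P[m]'hm) (P.take (m+1)) := by
  obtain ⟨hne, hnd, hch, hhead, hlast⟩ := h
  have hne' : P.take (m+1) ≠ [] := take_ne_nil m hm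
  refine ⟨hne', (List.take_sublist _ _).nodup hnd, hch.take _, ?_, ?_⟩
  · rw [head_take_eq m hm hne' hne]; exact hhead
  · exact getLast_take_eq m hm hne'

lemma path_snoc (h : IsPathBtw A s e P) (m : ℕ) (hm : m < P.length) (w : α)
    (hw : w ∉ P) (harc : A (P[m]'hm) w) :
    IsPathBtw A s w (P.take (m+1) ++ [w]) := by
  obtain ⟨hne, hnd, hch, hhead, hlast⟩ := h
  have hne' : P.take (m+1) ≠ [] := take_ne_nil m hm
  have hnea : P.take (m+1) ++ [w] ≠ [] := by simp
  have hnod : (P.take (m+1) ++ [w]).Nodup := by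
    refine List.Nodup.append ((List.take_sublist _ _).nodup hnd) (List.nodup_singleton w) ?_
    intro a ha hb
    rw [List.mem_singleton] at hb
    subst hb
    exact hw (List.take_subset _ _ ha)
  have hchain : (P.take (m+1) ++ [w]).Chain' A := by
    show List.IsChain A _
    rw [List.isChain_append]
    refine ⟨List.IsChain.take hch _, List.isChain_singleton w, ?_⟩
    intro p hp q hq
    rw [List.getLast?_eq_getLast hne'] at hp
    rw [Option.mem_def, Option.some_inj] at hp
    simp only [List.head?_cons, Option.mem_def, Option.some_inj] at hq
    subst hp; subst hq
    rw [getLast_take_eq m hm hne']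
    exact harc
  refine ⟨hnea, hnod, hchain, ?_, ?_⟩
  · rw [List.head_append_left hne', head_take_eq m hm hne' hne]
    exact hhead
  · rw [List.getLast_append_of_ne_nil _ (by simp : ([w] : List α) ≠ [])]
    rfl

lemma path_splice (h : IsPathBtw A s e P) {a b : ℕ} (hab : a < b) (hb : b < P.length)
    (harc : A (P[a]'(by omega)) (P[b]'hb)) :
    IsPathBtw A s e (P.take (a+1) ++ P.drop b) := by
  obtain ⟨hne, hnd, hch, hhead, hlast⟩ := h
  have ha : a < P.length := by omega
  have hne' : P.take (a+1) ≠ [] := take_ne_nil a ha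
  have hdne : P.drop b ≠ [] := by
    intro hh
    have := congrArg List.length hh
    rw [List.length_drop] at this
    simp at this
    omega
  have hnea : P.take (a+1) ++ P.drop b ≠ [] := by
    intro hh
    rcases List.append_eq_nil_iff.1 hh with ⟨h1, _⟩
    exact hne' h1
  have hsubl : (P.take (a+1) ++ P.drop b).Sublist P := by
    have h1 : (P.drop b).Sublist (P.drop (a+1)) := List.drop_sublist_drop_left _ (by omega)
    have h2 : (P.take (a+1) ++ P.drop b).Sublist (P.take (a+1) ++ P.drop (a+1)) :=
      h1.append_left _
    rwa [List.take_append_drop] at h2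
  have hnod : (P.take (a+1) ++ P.drop b).Nodup := hsubl.nodup hnd
  have hchain : (P.take (a+1) ++ P.drop b).Chain' A := by
    show List.IsChain A _
    rw [List.isChain_append]
    refine ⟨List.IsChain.take hch _, List.IsChain.drop hch _, ?_⟩
    intro p hp q hq
    rw [List.getLast?_eq_getLast hne'] at hp
    rw [Option.mem_def, Option.some_inj] at hp
    rw [List.head?_eq_head hdne, Option.mem_def, Option.some_inj] at hq
    subst hp; subst hq
    rw [getLast_take_eq a ha hne', List.head_drop]
    exact harc
  refine ⟨hnea, hnod, hchain, ?_, ?_⟩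
  · rw [List.head_append_left hne', head_take_eq a ha hne' hne]
    exact hhead
  · rw [List.getLast_append_of_ne_nil _ hdne, List.getLast_drop]
    exact hlast

lemma splice_length {a b : ℕ} (hab : a < b) (hb : b < P.length) :
    (P.take (a+1) ++ P.drop b).length = P.length - (b - a - 1) := by
  rw [List.length_append, List.length_take, List.length_drop]
  omega

end PathLemmas

lemma partition_mate {α ι : Type} {p : α → ι} {M1 : FinMatroid α}
    (hM1 : ∀ X : Finset α, M1.Indep X ↔ ∀ a ∈ X, ∀ b ∈ X, p a = p b → a = b)
    {I : Finset α} (hI1 : M1.Indep I) {x : α} (hx : x ∉ I)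
    (hdep : ¬ M1.Indep (insert x I)) : ∃ c ∈ I, p c = p x := by
  by_contra hcon
  push_neg at hcon
  refine hdep ((hM1 _).2 ?_)
  intro a ha b hb hab
  rcases Finset.mem_insert.1 ha with rfl | ha'
  · rcases Finset.mem_insert.1 hb with rfl | hb'
    · rfl
    · exact absurd hab.symm (hcon b hb')
  · rcases Finset.mem_insert.1 hb with rfl | hb'
    · exact absurd hab (hcon a ha')
    · exact (hM1 I).1 hI1 a ha' b hb' hab


/-- (Claim 6, Section 5.1.) Let `M1` be a partition matroid with all-one upper
bounds (independent sets pick at most one element of each class of the partition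
given by the fibers of `p`), `M2` arbitrary, `I ∈ 𝓘1 ∩ 𝓘2`, `s ∈ S_I \ T_I`,
`y' ∈ I`, and `P` a shortest `s`–`y'` path in `D'[I]` with `I △ V(P) ∈ 𝓘1 ∩ 𝓘2`.
Let `x ∈ E \ I` with `x ∉ P`, and `y ∈ I` such that there is no `s`–`y` path in
`D'[I]` of length at most `|P|`. Assume `(y', x) ∈ A'1[I]` implies `x ∉ T_I`.
Then `(y', x) ∈ A'1[I]` and `(x, y) ∈ A'2[I]` iff `{y', x} ∉ 𝓘1 ∩ 𝓘2` and
`I △ (V(P) ∪ {x, y}) ∈ 𝓘1 ∩ 𝓘2`. -/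
theorem stmt_19 {α : Type} [Fintype α] {ι : Type} (M1 M2 : FinMatroid α)
    (p : α → ι)
    (hM1 : ∀ X : Finset α, M1.Indep X ↔ ∀ a ∈ X, ∀ b ∈ X, p a = p b → a = b)
    (I : Finset α) (hI1 : M1.Indep I) (hI2 : M2.Indep I)
    (s : α) (hsS : inS M1 I s) (hsT : ¬ inT M2 I s)
    (y' : α) (hy' : y' ∈ I) (P : List α)
    (hP : IsPathBtw (DArcs' M1 M2 I) s y' P)
    (hPshort : ∀ Q, IsPathBtw (DArcs' M1 M2 I) s y' Q → P.length ≤ Q.length)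
    (hPI : M1.Indep (symmd I P.toFinset) ∧ M2.Indep (symmd I P.toFinset))
    (x : α) (hx : x ∉ I) (hxP : x ∉ P)
    (y : α) (hy : y ∈ I)
    (hnoy : ∀ Q, IsPathBtw (DArcs' M1 M2 I) s y Q → ¬ (Q.length ≤ P.length))
    (himp : A1' M1 I y' x → ¬ inT M2 I x) :
    (A1' M1 I y' x ∧ A2' M2 I x y) ↔
      (¬ (M1.Indep {y', x} ∧ M2.Indep {y', x}) ∧
        M1.Indep (symmd I (P.toFinset ∪ {x, y})) ∧
        M2.Indep (symmd I (P.toFinset ∪ {x, y}))) := by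
  classical
  obtain ⟨hne, hnd, hch, hhead, hlast⟩ := id hP
  have hn0 : 0 < P.length := List.length_pos_iff.2 hne
  -- alternation
  have halt : ∀ i (h : i < P.length), (P[i]'h ∈ I ↔ i % 2 = 1) := by
    intro i
    induction i with
    | zero =>
      intro h
      have h0 : P[0]'h = s := by
        rw [← hhead, List.head_eq_getElem]
      rw [h0]
      constructor
      · intro hh; exact absurd hh hsS.1
      · intro hh; omega
    | succ i ih =>
      intro h
      have hi : i < P.length := by omega
      have harc : DArcs' M1 M2 I (P[i]'hi) (P[i+1]'h) := by
        have := List.isChain_iff_getElem.1 hch i (by omega)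
        simpa [List.get_eq_getElem] using this
      have hiI := ih hi
      rcases harc with ⟨⟨haI, hbI, _⟩, _⟩ | ⟨⟨haI, hbI, _⟩, _⟩
      · have : i % 2 = 1 := hiI.1 haI
        constructor
        · intro hh; exact absurd hh hbI
        · intro hh; omega
      · have : ¬ (i % 2 = 1) := fun hh => haI (hiI.2 hh)
        constructor
        · intro _; omega
        · intro _; exact hbI
  have hlastget : P.getLast hne = P[P.length - 1]'(by omega) := List.getLast_eq_getElem _
  have hlastI : P[P.length - 1]'(by omega) ∈ I := by rw [← hlastget, hlast]; exact hy'
  have heven : P.length % 2 = 0 := by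
    have := (halt (P.length - 1) (by omega)).1 hlastI
    omega
  obtain ⟨k, hk⟩ : ∃ k, P.length = 2 * k := ⟨P.length / 2, by omega⟩
  have hk1 : 1 ≤ k := by omega
  -- xs / ws
  set xs : Fin k → α := fun i => P[2 * i.1]'(by omega) with hxsdef
  set ws : Fin k → α := fun i => P[2 * i.1 + 1]'(by omega) with hwsdef
  have hxsI : ∀ i, xs i ∉ I := by
    intro i hh
    have := (halt (2 * i.1) (by omega)).1 hh
    omega
  have hwsI : ∀ i, ws i ∈ I := by
    intro i
    exact (halt (2 * i.1 + 1) (by omega)).2 (by omega)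
  have hxsP : ∀ i, xs i ∈ P := fun i => List.getElem_mem _
  have hwsP : ∀ i, ws i ∈ P := fun i => List.getElem_mem _
  have hxs_inj : Function.Injective xs := by
    intro i j hij
    rw [hxsdef] at hij
    have := (hnd.getElem_inj_iff).1 hij
    exact Fin.ext (by omega)
  have hws_inj : Function.Injective ws := by
    intro i j hij
    rw [hwsdef] at hij
    have := (hnd.getElem_inj_iff).1 hij
    exact Fin.ext (by omega)
  have hxaux : ∀ (m : ℕ) (hm : m < P.length) (i : Fin k), 2 * i.1 = m → xs i = P[m]'hm := by
    rintro m hm i rfl; rfl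
  have hwaux : ∀ (m : ℕ) (hm : m < P.length) (i : Fin k), 2 * i.1 + 1 = m → ws i = P[m]'hm := by
    rintro m hm i rfl; rfl
  have hxs0 : xs ⟨0, by omega⟩ = s := by
    rw [hxaux 0 hn0 _ (by show 2*0 = 0; omega), ← hhead, List.head_eq_getElem]
  have hws_last : ws ⟨k - 1, by omega⟩ = y' := by
    rw [hwaux (P.length - 1) (by omega) _ (by show 2*(k-1)+1 = P.length - 1; omega), ← hlastget]
    exact hlast
  have harc2 : ∀ i : Fin k, A2' M2 I (xs i) (ws i) := by
    intro i
    have harc : DArcs' M1 M2 I (P[2*i.1]'(by omega)) (P[2*i.1+1]'(by omega)) := by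
      have := List.isChain_iff_getElem.1 hch (2*i.1) (by omega)
      simpa [List.get_eq_getElem] using this
    rcases harc with ⟨⟨haI, _, _⟩, _⟩ | h2
    · exact absurd haI (hxsI i)
    · exact h2
  have harc1 : ∀ (i : Fin k) (h : i.1 + 1 < k), A1' M1 I (ws i) (xs ⟨i.1+1, h⟩) := by
    intro i h
    have harc : DArcs' M1 M2 I (P[2*i.1+1]'(by omega)) (P[2*i.1+2]'(by omega)) := by
      have := List.isChain_iff_getElem.1 hch (2*i.1+1) (by omega)
      simpa [List.get_eq_getElem] using this
    have hxe : xs ⟨i.1+1, h⟩ = P[2*i.1+2]'(by omega) :=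
      hxaux (2*i.1+2) (by omega) _ (by show 2*(i.1+1) = 2*i.1+2; omega)
    rcases harc with h1 | ⟨⟨haI, _, _⟩, _⟩
    · rw [hxe]
      exact h1
    · exact absurd ((halt (2*i.1+1) (by omega)).2 (by omega) : P[2*i.1+1]'(by omega) ∈ I) haI
  -- membership characterization
  have hPmem : ∀ a, a ∈ P ↔ ((∃ i : Fin k, xs i = a) ∨ (∃ i : Fin k, ws i = a)) := by
    intro a
    constructor
    · intro ha
      obtain ⟨m, hm, rfl⟩ := List.mem_iff_getElem.1 ha
      by_cases hpar : m % 2 = 0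
      · exact Or.inl ⟨⟨m/2, by omega⟩, hxaux m hm _ (by show 2*(m/2) = m; omega)⟩
      · exact Or.inr ⟨⟨m/2, by omega⟩, hwaux m hm _ (by show 2*(m/2)+1 = m; omega)⟩
    · rintro (⟨i, rfl⟩ | ⟨i, rfl⟩)
      · exact hxsP i
      · exact hwsP i
  have hyP : y ∉ P := by
    intro hyP
    obtain ⟨m, hm, hma⟩ := List.mem_iff_getElem.1 hyP
    have hQ := path_take hP m hm
    rw [hma] at hQ
    refine hnoy _ hQ ?_
    rw [List.length_take]
    omega
  have hy'P : y' ∈ P := by rw [← hlast]; exact List.getLast_mem hne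
  have hyy' : y' ≠ y := fun h => hyP (h ▸ hy'P)
  have hxT_i : ∀ i : Fin k, ¬ inT M2 I (xs i) := fun i => (harc2 i).2
  have hnoarcY : ∀ i : Fin k, ¬ M2.Indep (insert (xs i) (I.erase y)) := by
    intro i hind
    have harcfull : DArcs' M1 M2 I (P[2*i.1]'(by omega)) y := by
      rw [← hxaux (2*i.1) (by omega) i rfl]
      exact Or.inr ⟨⟨hxsI i, hy, hind⟩, hxT_i i⟩
    have hQ := path_snoc hP (2*i.1) (by omega) y hyP harcfull
    refine hnoy _ hQ ?_
    rw [List.length_append, List.length_take]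
    simp only [List.length_singleton]
    omega
  have hnoarcW : ∀ i j : Fin k, i < j → ¬ M2.Indep (insert (xs i) (I.erase (ws j))) := by
    intro i j hij hind
    have hvl : i.1 < j.1 := hij
    have harcfull : DArcs' M1 M2 I (P[2*i.1]'(by omega)) (P[2*j.1+1]'(by omega)) := by
      rw [← hxaux (2*i.1) (by omega) i rfl, ← hwaux (2*j.1+1) (by omega) j rfl]
      exact Or.inr ⟨⟨hxsI i, hwsI j, hind⟩, hxT_i i⟩
    have hQ := path_splice hP (by omega : 2*i.1 < 2*j.1+1) (by omega) harcfull
    have hlen := hPshort _ hQ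
    rw [List.length_append, List.length_take, List.length_drop] at hlen
    omega
  -- set identities
  set Y := insert y (Finset.image ws Finset.univ) with hYdef
  set X := insert x (Finset.image xs Finset.univ) with hXdef
  have hYI : Y ⊆ I := by
    intro a ha
    rcases Finset.mem_insert.1 ha with rfl | ha
    · exact hy
    · obtain ⟨i, _, rfl⟩ := Finset.mem_image.1 ha; exact hwsI i
  have hXnI : ∀ a ∈ X, a ∉ I := by
    intro a ha
    rcases Finset.mem_insert.1 ha with rfl | ha
    · exact hx
    · obtain ⟨i, _, rfl⟩ := Finset.mem_image.1 ha; exact hxsI i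
  have hPt : ∀ a, a ∈ P.toFinset ↔ ((∃ i : Fin k, xs i = a) ∨ (∃ i : Fin k, ws i = a)) :=
    fun a => by rw [List.mem_toFinset]; exact hPmem a
  have hsd1 : (P.toFinset ∪ {x, y}) \ I = X := by
    ext a
    simp only [Finset.mem_sdiff, Finset.mem_union, Finset.mem_insert, Finset.mem_singleton,
      hXdef, Finset.mem_image, Finset.mem_univ, true_and, hPt]
    constructor
    · rintro ⟨(⟨i, rfl⟩ | ⟨i, rfl⟩) | (rfl | rfl), hnI⟩
      · exact Or.inr ⟨i, rfl⟩
      · exact absurd (hwsI i) hnI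
      · exact Or.inl rfl
      · exact absurd hy hnI
    · rintro (rfl | ⟨i, rfl⟩)
      · exact ⟨Or.inr (Or.inl rfl), hx⟩
      · exact ⟨Or.inl (Or.inl ⟨i, rfl⟩), hxsI i⟩
  have hsd2 : I \ (P.toFinset ∪ {x, y}) = I \ Y := by
    ext a
    simp only [Finset.mem_sdiff, Finset.mem_union, Finset.mem_insert, Finset.mem_singleton,
      hYdef, Finset.mem_image, Finset.mem_univ, true_and, hPt]
    constructor
    · rintro ⟨haI, hn⟩
      refine ⟨haI, ?_⟩
      rintro (rfl | ⟨i, rfl⟩)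
      · exact hn (Or.inr (Or.inr rfl))
      · exact hn (Or.inl (Or.inr ⟨i, rfl⟩))
    · rintro ⟨haI, hnY⟩
      refine ⟨haI, ?_⟩
      rintro ((⟨i, rfl⟩ | ⟨i, rfl⟩) | (rfl | rfl))
      · exact hxsI i haI
      · exact hnY (Or.inr ⟨i, rfl⟩)
      · exact hx haI
      · exact hnY (Or.inl rfl)
  have hsymm : symmd I (P.toFinset ∪ {x, y}) = (I \ Y) ∪ X := by
    rw [symmd, hsd1, hsd2]
  have hyimg : y ∉ Finset.image ws Finset.univ := by
    intro hh
    obtain ⟨i, _, hi⟩ := Finset.mem_image.1 hh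
    exact hyP (hi ▸ hwsP i)
  have hximg : x ∉ Finset.image xs Finset.univ := by
    intro hh
    obtain ⟨i, _, hi⟩ := Finset.mem_image.1 hh
    exact hxP (hi ▸ hxsP i)
  have cardY : Y.card = k + 1 := by
    rw [hYdef, Finset.card_insert_of_notMem hyimg,
      Finset.card_image_of_injective _ hws_inj, Finset.card_univ, Fintype.card_fin]
  have cardX : X.card = k + 1 := by
    rw [hXdef, Finset.card_insert_of_notMem hximg,
      Finset.card_image_of_injective _ hxs_inj, Finset.card_univ, Fintype.card_fin]
  have harc1N : ∀ (m : ℕ) (hm : m < k), 1 ≤ m → A1' M1 I (ws ⟨m-1, by omega⟩) (xs ⟨m, hm⟩) := by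
    intro m hm hm1
    have harc : DArcs' M1 M2 I (P[2*(m-1)+1]'(by omega)) (P[2*(m-1)+2]'(by omega)) := by
      have := List.isChain_iff_getElem.1 hch (2*(m-1)+1) (by omega)
      simpa [List.get_eq_getElem] using this
    rw [← hwaux (2*(m-1)+1) (by omega) ⟨m-1, by omega⟩ rfl,
        ← hxaux (2*(m-1)+2) (by omega) ⟨m, hm⟩ (by show 2*m = 2*(m-1)+2; omega)] at harc
    rcases harc with h1 | ⟨⟨haI, _, _⟩, _⟩
    · exact h1
    · exact absurd (hwsI ⟨m-1, by omega⟩) haI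
  have hIuniq : ∀ c ∈ I, ∀ d ∈ I, p c = p d → c = d := (hM1 I).1 hI1
  have hs_free : ∀ c ∈ I, p c ≠ p s := by
    intro c hc hcp
    have := (hM1 _).1 hsS.2 c (Finset.mem_insert_of_mem hc) s (Finset.mem_insert_self _ _) hcp
    exact hsS.1 (this ▸ hc)
  have hclassN : ∀ (m : ℕ) (hm : m < k), 1 ≤ m → ∀ c ∈ I,
      p c = p (xs ⟨m, hm⟩) → c = ws ⟨m-1, by omega⟩ := by
    intro m hm hm1 c hcI hcp
    obtain ⟨⟨hwI, hxnI, hind⟩, hnS⟩ := harc1N m hm hm1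
    by_contra hcw
    have hcmem : c ∈ insert (xs ⟨m, hm⟩) (I.erase (ws ⟨m-1, by omega⟩)) :=
      Finset.mem_insert_of_mem (Finset.mem_erase.2 ⟨hcw, hcI⟩)
    have := (hM1 _).1 hind c hcmem _ (Finset.mem_insert_self _ _) hcp
    exact hxnI (this ▸ hcI)
  have hpclass : ∀ (m : ℕ) (hm : m < k), 1 ≤ m →
      p (xs ⟨m, hm⟩) = p (ws ⟨m-1, by omega⟩) := by
    intro m hm hm1
    obtain ⟨⟨hwI, hxnI, hind⟩, hnS⟩ := harc1N m hm hm1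
    obtain ⟨c, hcI, hcp⟩ := partition_mate hM1 hI1 hxnI (fun hind' => hnS ⟨hxnI, hind'⟩)
    have hce := hclassN m hm hm1 c hcI hcp
    rw [← hce, ← hcp]
  constructor
  · rintro ⟨hA1x, hA2xy⟩
    obtain ⟨⟨hy'I, hxnI2, hind1⟩, hnSx⟩ := hA1x
    obtain ⟨c0, hc0I, hc0x⟩ := partition_mate hM1 hI1 hx (fun hind => hnSx ⟨hx, hind⟩)
    have hc0y' : c0 = y' := by
      by_contra hcy
      have hcmem : c0 ∈ insert x (I.erase y') :=
        Finset.mem_insert_of_mem (Finset.mem_erase.2 ⟨hcy, hc0I⟩)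
      have := (hM1 _).1 hind1 c0 hcmem x (Finset.mem_insert_self _ _) hc0x
      exact hx (this ▸ hc0I)
    have hpx : p x = p y' := by rw [← hc0y']; exact hc0x.symm
    have hcomp1 : ¬ (M1.Indep {y', x} ∧ M2.Indep {y', x}) := by
      rintro ⟨h1, _⟩
      have := (hM1 _).1 h1 y' (Finset.mem_insert_self _ _)
        x (Finset.mem_insert_of_mem (Finset.mem_singleton_self _)) hpx.symm
      exact hx (this ▸ hy')
    have hpxw : p x = p (ws ⟨k-1, by omega⟩) := by rw [hpx, ← hws_last]
    -- tags of elements of X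
    have hXtag : ∀ a ∈ X, (s = a ∧ ∀ c ∈ I, p c ≠ p a) ∨
        (∃ (m : ℕ) (hm : m < k), 1 ≤ m ∧ xs ⟨m, hm⟩ = a ∧ p a = p (ws ⟨m-1, by omega⟩)) ∨
        (x = a ∧ p a = p (ws ⟨k-1, by omega⟩)) := by
      intro a ha
      rcases Finset.mem_insert.1 ha with rfl | ha
      · exact Or.inr (Or.inr ⟨rfl, hpxw⟩)
      · obtain ⟨i, -, rfl⟩ := Finset.mem_image.1 ha
        by_cases hi0 : i.1 = 0
        · have hsa : s = xs i := by
            rw [← hxs0]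
            exact congrArg xs (Fin.ext (show (0:ℕ) = i.1 by omega))
          exact Or.inl ⟨hsa, by rw [← hsa]; exact hs_free⟩
        · refine Or.inr (Or.inl ⟨i.1, i.2, by omega, congrArg xs (Fin.ext rfl), ?_⟩)
          exact hpclass i.1 i.2 (by omega)
    have hXclass : ∀ a ∈ X, ∀ c ∈ I, p c = p a → c ∈ Y := by
      intro a ha c hc hcp
      rcases hXtag a ha with ⟨-, hfa⟩ | ⟨m, hm, hm1, rfl, hpa⟩ | ⟨rfl, hpa⟩
      · exact absurd hcp (hfa c hc)
      · have := hclassN m hm hm1 c hc hcp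
        rw [this]
        exact Finset.mem_insert_of_mem (Finset.mem_image_of_mem _ (Finset.mem_univ _))
      · have hcy' : c = ws ⟨k-1, by omega⟩ := hIuniq c hc _ (hwsI _) (by rw [hcp, hpa])
        rw [hcy']
        exact Finset.mem_insert_of_mem (Finset.mem_image_of_mem _ (Finset.mem_univ _))
    have hXinj : ∀ a ∈ X, ∀ b ∈ X, p a = p b → a = b := by
      intro a ha b hb hpab
      rcases hXtag a ha with ⟨hsa, hfa⟩ | ⟨m, hm, hm1, rfl, hpa⟩ | ⟨rfl, hpa⟩ <;>
        rcases hXtag b hb with ⟨hsb, hfb⟩ | ⟨m', hm', hm1', rfl, hpb⟩ | ⟨rfl, hpb⟩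
      · rw [← hsa, ← hsb]
      · exact absurd (show p (ws ⟨m'-1, by omega⟩) = p a from by rw [← hpb, ← hpab])
          (hfa _ (hwsI _))
      · exact absurd (show p (ws ⟨k-1, by omega⟩) = p a from by rw [← hpb, ← hpab])
          (hfa _ (hwsI _))
      · exact absurd (show p (ws ⟨m-1, by omega⟩) = p b from by rw [← hpa, hpab])
          (hfb _ (hwsI _))
      · have hwe : ws ⟨m-1, by omega⟩ = ws ⟨m'-1, by omega⟩ :=
          hIuniq _ (hwsI _) _ (hwsI _) (by rw [← hpa, ← hpb, hpab])
        have hv := congrArg Fin.val (hws_inj hwe)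
        have hv' : m - 1 = m' - 1 := hv
        exact congrArg xs (Fin.ext (show m = m' by omega))
      · have hwe : ws ⟨m-1, by omega⟩ = ws ⟨k-1, by omega⟩ :=
          hIuniq _ (hwsI _) _ (hwsI _) (by rw [← hpa, ← hpb, hpab])
        have hv := congrArg Fin.val (hws_inj hwe)
        have hv' : m - 1 = k - 1 := hv
        exact absurd hv' (by omega)
      · exact absurd (show p (ws ⟨k-1, by omega⟩) = p b from by rw [← hpa, hpab])
          (hfb _ (hwsI _))
      · have hwe : ws ⟨k-1, by omega⟩ = ws ⟨m'-1, by omega⟩ :=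
          hIuniq _ (hwsI _) _ (hwsI _) (by rw [← hpa, ← hpb, hpab])
        have hv := congrArg Fin.val (hws_inj hwe)
        have hv' : k - 1 = m' - 1 := hv
        exact absurd hv' (by omega)
      · rfl
    have hJ'1 : M1.Indep ((I \ Y) ∪ X) := by
      rw [hM1]
      intro a ha b hb hpab
      rcases Finset.mem_union.1 ha with ha' | ha' <;> rcases Finset.mem_union.1 hb with hb' | hb'
      · exact hIuniq a (Finset.mem_sdiff.1 ha').1 b (Finset.mem_sdiff.1 hb').1 hpab
      · exact absurd (hXclass b hb' a (Finset.mem_sdiff.1 ha').1 hpab)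
          (Finset.mem_sdiff.1 ha').2
      · exact absurd (hXclass a ha' b (Finset.mem_sdiff.1 hb').1 hpab.symm)
          (Finset.mem_sdiff.1 hb').2
      · exact hXinj a ha' b hb' hpab
    -- M2 via staircase
    set xs' : Fin (k+1) → α := fun i => if h : i.1 < k then xs ⟨i.1, h⟩ else x with hxs'def
    set ws' : Fin (k+1) → α := fun i => if h : i.1 < k then ws ⟨i.1, h⟩ else y with hws'def
    have hxs'lt : ∀ (i : Fin (k+1)) (h : i.1 < k), xs' i = xs ⟨i.1, h⟩ := fun i h => dif_pos h
    have hxs'top : ∀ (i : Fin (k+1)), ¬ (i.1 < k) → xs' i = x := fun i h => dif_neg h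
    have hws'lt : ∀ (i : Fin (k+1)) (h : i.1 < k), ws' i = ws ⟨i.1, h⟩ := fun i h => dif_pos h
    have hws'top : ∀ (i : Fin (k+1)), ¬ (i.1 < k) → ws' i = y := fun i h => dif_neg h
    have hxI' : ∀ i, xs' i ∉ I := by
      intro i
      by_cases h : i.1 < k
      · rw [hxs'lt i h]; exact hxsI _
      · rw [hxs'top i h]; exact hx
    have hyI' : ∀ i, ws' i ∈ I := by
      intro i
      by_cases h : i.1 < k
      · rw [hws'lt i h]; exact hwsI _
      · rw [hws'top i h]; exact hy
    have hxinj' : Function.Injective xs' := by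
      intro i j hij
      by_cases hi : i.1 < k <;> by_cases hj : j.1 < k
      · rw [hxs'lt i hi, hxs'lt j hj] at hij
        have hv := congrArg Fin.val (hxs_inj hij)
        exact Fin.ext hv
      · rw [hxs'lt i hi, hxs'top j hj] at hij
        exact absurd (hij ▸ hxsP ⟨i.1, hi⟩) hxP
      · rw [hxs'top i hi, hxs'lt j hj] at hij
        exact absurd (hij ▸ hxsP ⟨j.1, hj⟩) hxP
      · exact Fin.ext (by omega)
    have hyinj' : Function.Injective ws' := by
      intro i j hij
      by_cases hi : i.1 < k <;> by_cases hj : j.1 < k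
      · rw [hws'lt i hi, hws'lt j hj] at hij
        have hv := congrArg Fin.val (hws_inj hij)
        exact Fin.ext hv
      · rw [hws'lt i hi, hws'top j hj] at hij
        exact absurd (hij ▸ hwsP ⟨i.1, hi⟩) hyP
      · rw [hws'top i hi, hws'lt j hj] at hij
        exact absurd (hij ▸ hwsP ⟨j.1, hj⟩) hyP
      · exact Fin.ext (by omega)
    have hdep' : ∀ i, ¬ M2.Indep (insert (xs' i) I) := by
      intro i hind
      by_cases h : i.1 < k
      · rw [hxs'lt i h] at hind; exact hxT_i _ ⟨hxsI _, hind⟩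
      · rw [hxs'top i h] at hind; exact hA2xy.2 ⟨hx, hind⟩
    have hex' : ∀ i, M2.Indep (insert (xs' i) (I.erase (ws' i))) := by
      intro i
      by_cases h : i.1 < k
      · rw [hxs'lt i h, hws'lt i h]; exact (harc2 _).1.2.2
      · rw [hxs'top i h, hws'top i h]; exact hA2xy.1.2.2
    have hforb' : ∀ i j : Fin (k+1), i < j → ¬ M2.Indep (insert (xs' i) (I.erase (ws' j))) := by
      intro i j hij hind
      have hvl : i.1 < j.1 := hij
      have hik : i.1 < k := by omega
      rw [hxs'lt i hik] at hind
      by_cases hjk : j.1 < k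
      · rw [hws'lt j hjk] at hind
        exact hnoarcW ⟨i.1, hik⟩ ⟨j.1, hjk⟩ hvl hind
      · rw [hws'top j hjk] at hind
        exact hnoarcY ⟨i.1, hik⟩ hind
    have hstair := M2.staircase hI2 xs' ws' hxI' hyI' hxinj' hyinj' hdep' hex' hforb'
    have himgx' : Finset.image xs' Finset.univ = X := by
      rw [hXdef]
      ext a
      simp only [Finset.mem_image, Finset.mem_univ, true_and, Finset.mem_insert]
      constructor
      · rintro ⟨i, rfl⟩
        by_cases h : i.1 < k
        · exact Or.inr ⟨⟨i.1, h⟩, (hxs'lt i h).symm⟩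
        · exact Or.inl (hxs'top i h)
      · rintro (rfl | ⟨j, rfl⟩)
        · exact ⟨⟨k, by omega⟩, hxs'top ⟨k, by omega⟩ (by show ¬ (k < k); omega)⟩
        · refine ⟨⟨j.1, by omega⟩, ?_⟩
          rw [hxs'lt ⟨j.1, by omega⟩ (show j.1 < k from j.2)]
    have himgw' : Finset.image ws' Finset.univ = Y := by
      rw [hYdef]
      ext a
      simp only [Finset.mem_image, Finset.mem_univ, true_and, Finset.mem_insert]
      constructor
      · rintro ⟨i, rfl⟩
        by_cases h : i.1 < k
        · exact Or.inr ⟨⟨i.1, h⟩, (hws'lt i h).symm⟩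
        · exact Or.inl (hws'top i h)
      · rintro (rfl | ⟨j, rfl⟩)
        · exact ⟨⟨k, by omega⟩, hws'top ⟨k, by omega⟩ (by show ¬ (k < k); omega)⟩
        · refine ⟨⟨j.1, by omega⟩, ?_⟩
          rw [hws'lt ⟨j.1, by omega⟩ (show j.1 < k from j.2)]
    rw [himgx', himgw'] at hstair
    exact ⟨hcomp1, by rw [hsymm]; exact hJ'1, by rw [hsymm]; exact hstair⟩
  · rintro ⟨hnind, hJ'1, hJ'2⟩
    rw [hsymm] at hJ'1 hJ'2
    have hkI : k + 1 ≤ I.card := by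
      have := Finset.card_le_card hYI
      omega
    have hdisj : Disjoint (I \ Y) X := by
      rw [Finset.disjoint_right]
      intro a haX haIY
      exact hXnI a haX (Finset.mem_sdiff.1 haIY).1
    have cardJ' : ((I \ Y) ∪ X).card = I.card := by
      rw [Finset.card_union_of_disjoint hdisj, Finset.card_sdiff_of_subset hYI, cardY, cardX]
      omega
    have hJI : ((I \ Y) ∪ X) \ I = X := by
      ext a
      simp only [Finset.mem_sdiff, Finset.mem_union]
      constructor
      · rintro ⟨(h | h), hnI⟩
        · exact absurd h.1 hnI
        · exact h
      · intro h
        exact ⟨Or.inr h, hXnI a h⟩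
    have hIJ : I \ ((I \ Y) ∪ X) = Y := by
      ext a
      simp only [Finset.mem_sdiff, Finset.mem_union]
      constructor
      · rintro ⟨haI, hn⟩
        by_contra hnY
        exact hn (Or.inl ⟨haI, hnY⟩)
      · intro haY
        refine ⟨hYI haY, ?_⟩
        rintro (h | h)
        · exact h.2 haY
        · exact hXnI a h (hYI haY)
    obtain ⟨g, hginj, hgprop⟩ := M2.exists_matching hI2 hJ'2 cardJ'
    rw [hJI] at hginj
    have hgp : ∀ z ∈ X, g z ∈ Y ∧ M2.Indep (insert z (I.erase (g z))) := by
      intro z hz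
      have := hgprop z (by rw [hJI]; exact hz)
      rwa [hIJ] at this
    have hgw : ∀ (m : ℕ) (hm : m < k), g (xs ⟨m, hm⟩) = ws ⟨m, hm⟩ := by
      intro m
      induction m using Nat.strong_induction_on with
      | _ m ih =>
        intro hm
        have hmemX : xs ⟨m, hm⟩ ∈ X :=
          Finset.mem_insert_of_mem (Finset.mem_image_of_mem _ (Finset.mem_univ _))
        obtain ⟨hgY, hgind⟩ := hgp _ hmemX
        rcases Finset.mem_insert.1 hgY with hgy | hgw'
        · rw [hgy] at hgind
          exact absurd hgind (hnoarcY ⟨m, hm⟩)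
        · obtain ⟨j, -, hj⟩ := Finset.mem_image.1 hgw'
          rcases lt_trichotomy j.1 m with hlt | heq | hgt
          · have hthis : g (xs j) = ws j := ih j.1 hlt j.2
            have hgg : g (xs j) = g (xs ⟨m, hm⟩) := by rw [hthis, hj]
            have hxx : xs j = xs ⟨m, hm⟩ := hginj
              (Finset.mem_coe.2 (Finset.mem_insert_of_mem
                (Finset.mem_image_of_mem _ (Finset.mem_univ _))))
              (Finset.mem_coe.2 hmemX) hgg
            have hv : j.1 = m := congrArg Fin.val (hxs_inj hxx)
            exact absurd hv (by omega)
          · rw [← hj]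
            exact congrArg ws (Fin.ext heq)
          · rw [← hj] at hgind
            exact absurd hgind (hnoarcW ⟨m, hm⟩ j hgt)
    have hgx : g x = y := by
      have hxX : x ∈ X := Finset.mem_insert_self _ _
      obtain ⟨hgY, hgind⟩ := hgp x hxX
      rcases Finset.mem_insert.1 hgY with h | h
      · exact h
      · obtain ⟨j, -, hj⟩ := Finset.mem_image.1 h
        have hthis : g (xs j) = ws j := hgw j.1 j.2
        have hgg : g (xs j) = g x := by rw [hthis, hj]
        have hxx : xs j = x := hginj
          (Finset.mem_coe.2 (Finset.mem_insert_of_mem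
            (Finset.mem_image_of_mem _ (Finset.mem_univ _))))
          (Finset.mem_coe.2 hxX) hgg
        exact absurd (hxx ▸ hxsP j) hxP
    have hA2 : M2.Indep (insert x (I.erase y)) := by
      have := (hgp x (Finset.mem_insert_self _ _)).2
      rwa [hgx] at this
    have hM2pair : M2.Indep {y', x} := by
      refine M2.subset_indep hA2 ?_
      intro a ha
      rcases Finset.mem_insert.1 ha with rfl | ha'
      · exact Finset.mem_insert_of_mem (Finset.mem_erase.2 ⟨hyy', hy'⟩)
      · rw [Finset.mem_singleton.1 ha']
        exact Finset.mem_insert_self _ _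
    have hnM1 : ¬ M1.Indep {y', x} := fun h => hnind ⟨h, hM2pair⟩
    have hpx : p x = p y' := by
      by_contra hpxne
      refine hnM1 ((hM1 _).2 ?_)
      intro a ha b hb hab
      rcases Finset.mem_insert.1 ha with rfl | ha'
      · rcases Finset.mem_insert.1 hb with rfl | hb'
        · rfl
        · obtain rfl := Finset.mem_singleton.1 hb'
          exact absurd hab.symm hpxne
      · obtain rfl := Finset.mem_singleton.1 ha'
        rcases Finset.mem_insert.1 hb with rfl | hb'
        · exact absurd hab hpxne
        · obtain rfl := Finset.mem_singleton.1 hb'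
          rfl
    have hnSx : ¬ inS M1 I x := by
      rintro ⟨-, hind⟩
      have := (hM1 _).1 hind y' (Finset.mem_insert_of_mem hy')
        x (Finset.mem_insert_self _ _) hpx.symm
      exact hx (this ▸ hy')
    have hA1ind : M1.Indep (insert x (I.erase y')) := by
      rw [hM1]
      intro a ha b hb hab
      rcases Finset.mem_insert.1 ha with rfl | ha'
      · rcases Finset.mem_insert.1 hb with rfl | hb'
        · rfl
        · have hbI := Finset.mem_erase.1 hb'
          have hbe : b = y' := hIuniq b hbI.2 y' hy' (by rw [← hab, hpx])
          exact absurd hbe hbI.1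
      · rcases Finset.mem_insert.1 hb with rfl | hb'
        · have haI := Finset.mem_erase.1 ha'
          have hae : a = y' := hIuniq a haI.2 y' hy' (by rw [hab, hpx])
          exact absurd hae haI.1
        · exact hIuniq a (Finset.mem_erase.1 ha').2 b (Finset.mem_erase.1 hb').2 hab
    have hA1'full : A1' M1 I y' x := ⟨⟨hy', hx, hA1ind⟩, hnSx⟩
    exact ⟨hA1'full, ⟨⟨hx, hy, hA2⟩, himp hA1'full⟩⟩
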